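/- For each n ≥ 2, the sequence λ_n of largest real roots of LT_n(x) = x^{2n} - x^{n+1} - x^n - x^{n-1} + 1 is strictly decreasing and converges to 1. -/

import Mathlib

/-!
Dividing by `x ^ n`, a root `x > 1` of `LT_n` is a solution of `k (x ^ n) = k x + 1`, where
`k y = y + y⁻¹` is strictly increasing on `[1, ∞)`. For fixed `x > 1` the left side grows with `n`,
so `LT_m (λ_n) < 0` when `m < n`; and `x ↦ k (x ^ m) - k x` is monotone on `[1, ∞)`, so this
forces `λ_n < λ_m`. Finally `λ_n ^ n < k (λ_n ^ n) = k λ_n + 1 < λ_2 + 2`, which pins `λ_n` to `1`.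
-/

open Filter Set Topology

lemma add_inv_sub_add_inv {a b : ℝ} (ha : a ≠ 0) (hb : b ≠ 0) :
    b + b⁻¹ - (a + a⁻¹) = (b - a) * (1 - (a * b)⁻¹) := by
  field_simp
  ring

lemma strictMonoOn_add_inv : StrictMonoOn (fun y : ℝ => y + y⁻¹) (Ici 1) := by
  intro a (ha : 1 ≤ a) b (hb : 1 ≤ b) hab
  have hab1 : 1 < a * b := one_lt_mul_of_le_of_lt ha (ha.trans_lt hab)
  have key := add_inv_sub_add_inv (a := a) (b := b) (by positivity) (by positivity)
  have : 0 < (b - a) * (1 - (a * b)⁻¹) :=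
    mul_pos (sub_pos.2 hab) (sub_pos.2 (inv_lt_one_of_one_lt₀ hab1))
  simp only
  linarith

lemma sub_le_pow_sub_pow {a b : ℝ} (ha : 1 ≤ a) (hab : a ≤ b) {m : ℕ} (hm : 1 ≤ m) :
    b - a ≤ b ^ m - a ^ m := by
  induction m, hm using Nat.le_induction with
  | base => simp
  | succ m _ ih =>
    have hdiff : b ^ (m + 1) - a ^ (m + 1) = b * (b ^ m - a ^ m) + a ^ m * (b - a) := by ring
    have h1 : b ^ m - a ^ m ≤ b * (b ^ m - a ^ m) :=
      le_mul_of_one_le_left ((sub_nonneg.2 hab).trans ih) (ha.trans hab)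
    have h2 : 0 ≤ a ^ m * (b - a) := mul_nonneg (by positivity) (sub_nonneg.2 hab)
    linarith

lemma monotoneOn_pow_add_inv_sub_add_inv {m : ℕ} (hm : 1 ≤ m) :
    MonotoneOn (fun x : ℝ => x ^ m + (x ^ m)⁻¹ - (x + x⁻¹)) (Ici 1) := by
  intro a (ha : 1 ≤ a) b (hb : 1 ≤ b) hab
  have hpow : b - a ≤ b ^ m - a ^ m := sub_le_pow_sub_pow ha hab hm
  have hprod : a * b ≤ a ^ m * b ^ m :=
    mul_le_mul (le_self_pow₀ ha (by omega)) (le_self_pow₀ hb (by omega)) (by positivity)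
      (by positivity)
  have hinv : 1 - (a * b)⁻¹ ≤ 1 - (a ^ m * b ^ m)⁻¹ :=
    sub_le_sub_left (inv_anti₀ (by positivity) hprod) 1
  have hinv_nonneg : 0 ≤ 1 - (a * b)⁻¹ :=
    sub_nonneg.2 (inv_le_one_of_one_le₀ (one_le_mul_of_one_le_of_one_le ha hb))
  have key :=
    mul_le_mul hpow hinv hinv_nonneg (sub_nonneg.2 (pow_le_pow_left₀ (by linarith) hab m))
  rw [← add_inv_sub_add_inv (by positivity) (by positivity),
    ← add_inv_sub_add_inv (by positivity) (by positivity)] at key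
  simp only
  linarith

def ltPoly (n : ℕ) (x : ℝ) : ℝ := x ^ (2 * n) - x ^ (n + 1) - x ^ n - x ^ (n - 1) + 1

lemma ltPoly_eq_pow_mul {n : ℕ} (hn : 1 ≤ n) {x : ℝ} (hx : x ≠ 0) :
    ltPoly n x = x ^ n * (x ^ n + (x ^ n)⁻¹ - (x + x⁻¹) - 1) := by
  obtain ⟨k, rfl⟩ := Nat.exists_eq_add_of_le' hn
  simp only [ltPoly, Nat.add_sub_cancel]
  field_simp
  ring

lemma ltPoly_eq_zero_iff {n : ℕ} (hn : 1 ≤ n) {x : ℝ} (hx : x ≠ 0) :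
    ltPoly n x = 0 ↔ x ^ n + (x ^ n)⁻¹ = x + x⁻¹ + 1 := by
  rw [ltPoly_eq_pow_mul hn hx, mul_eq_zero, sub_sub, sub_eq_zero]
  simp [hx]

lemma lt_of_ltPoly_eq_zero {m n : ℕ} (hm : 1 ≤ m) (hmn : m < n) {a b : ℝ} (ha : 1 < a)
    (hb : 1 < b) (hma : ltPoly m a = 0) (hnb : ltPoly n b = 0) : b < a := by
  rw [ltPoly_eq_zero_iff hm (by positivity)] at hma
  rw [ltPoly_eq_zero_iff (hm.trans hmn.le) (by positivity)] at hnb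
  by_contra! hab
  have hmono := monotoneOn_pow_add_inv_sub_add_inv hm ha.le hb.le hab
  have hstrict : b ^ m + (b ^ m)⁻¹ < b ^ n + (b ^ n)⁻¹ :=
    strictMonoOn_add_inv (one_le_pow₀ hb.le) (one_le_pow₀ hb.le) (pow_lt_pow_right₀ hb hmn)
  simp only at hmono
  linarith

lemma pow_lt_add_two_of_ltPoly_eq_zero {n : ℕ} (hn : 1 ≤ n) {x : ℝ} (hx : 1 < x)
    (h : ltPoly n x = 0) : x ^ n < x + 2 := by
  rw [ltPoly_eq_zero_iff hn (by positivity)] at h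
  have : 0 < (x ^ n)⁻¹ := by positivity
  have : x⁻¹ < 1 := inv_lt_one_of_one_lt₀ hx
  linarith

lemma tendsto_one_of_pow_le {x : ℕ → ℝ} {C : ℝ} (h1 : ∀ᶠ n in atTop, 1 ≤ x n)
    (hC : ∀ᶠ n in atTop, x n ^ n ≤ C) : Tendsto x atTop (𝓝 1) := by
  rw [tendsto_order]
  refine ⟨fun c hc => h1.mono fun n hn => hc.trans_le hn, fun c hc => ?_⟩
  obtain ⟨N, hN⟩ := pow_unbounded_of_one_lt C hc
  filter_upwards [hC, eventually_ge_atTop N] with n hCn hNn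
  exact lt_of_pow_lt_pow_left₀ n (by positivity) <|
    hCn.trans_lt (hN.trans_le (pow_le_pow_right₀ hc.le hNn))

theorem LT_root_strict_anti_tendsto_one (lam : ℕ → ℝ)
    (hlam : ∀ n, 2 ≤ n → 1 < lam n ∧
      (lam n) ^ (2 * n) - (lam n) ^ (n + 1) - (lam n) ^ n - (lam n) ^ (n - 1) + 1 = 0) :
    (∀ m n : ℕ, 2 ≤ m → m < n → lam n < lam m) ∧
      Tendsto lam atTop (nhds 1) := by
  have anti (m n : ℕ) (hm : 2 ≤ m) (hmn : m < n) : lam n < lam m :=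
    lt_of_ltPoly_eq_zero (by omega) hmn (hlam m hm).1 (hlam n (by omega)).1 (hlam m hm).2
      (hlam n (by omega)).2
  refine ⟨anti, tendsto_one_of_pow_le (C := lam 2 + 2) ?_ ?_⟩
  · filter_upwards [eventually_ge_atTop 2] with n hn using (hlam n hn).1.le
  · filter_upwards [eventually_ge_atTop 2] with n hn
    have hbound : lam n ≤ lam 2 := by
      rcases hn.eq_or_lt with rfl | hlt
      · rfl
      · exact (anti 2 n le_rfl hlt).le
    have := pow_lt_add_two_of_ltPoly_eq_zero (by omega) (hlam n hn).1 (hlam n hn).2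
    linarith
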